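/- arXiv:1312.3942 — 2 statements merged into one kernel-verified Lean document; each statement's English description precedes it below -/
import Mathlib

section
/- Let h_{AB}(y) be a Riemannian metric on an open set in ℝ^{n−1} and F a smooth function of y. For the Lagrangian L = ½(ṙ² + r² h_{AB} ẏ^A ẏ^B) + ½μ²r² − F(y)/r², the Ermakov invariant Φ₀ = r⁴ h_{AB} ẏ^A ẏ^B + 2F(y) is constant along solutions of the Euler–Lagrange equations. -/
/-- Partial derivative of a real function on `Fin m → ℝ` in the `A`-th coordinate direction. -/
noncomputable def pd {m : ℕ} (f : (Fin m → ℝ) → ℝ) (A : Fin m) (x : Fin m → ℝ) : ℝ :=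
  fderiv ℝ f x (Pi.single A 1)

lemma fd_sum {m : ℕ} (f : (Fin m → ℝ) → ℝ) (x v : Fin m → ℝ) :
    fderiv ℝ f x v = ∑ A, pd f A x * v A := by
  have hv : v = ∑ A, v A • (Pi.single A 1 : Fin m → ℝ) := by
    funext j
    simp [Finset.sum_apply, Pi.single_apply]
  conv_lhs => rw [hv]
  rw [map_sum]
  simp [pd, mul_comm]

lemma sum_rot3 {m : ℕ} (f : Fin m → Fin m → Fin m → ℝ) :
    ∑ a, ∑ b, ∑ c, f a b c = ∑ a, ∑ b, ∑ c, f c a b := by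
  rw [Finset.sum_comm]
  exact Finset.sum_congr rfl fun b _ => Finset.sum_comm

/-- For the Lagrangian `L = ½(ṙ² + r² h_{AB} ẏ^A ẏ^B) + ½μ²r² − F(y)/r²`, the Ermakov
invariant `Φ₀ = r⁴ h_{AB} ẏ^A ẏ^B + 2F(y)` is constant along solutions of the
Euler–Lagrange equations. -/
theorem stmt_4 {m : ℕ} (h : (Fin m → ℝ) → Fin m → Fin m → ℝ) (F : (Fin m → ℝ) → ℝ) (μ : ℝ)
    (hh : ∀ A B, ContDiff ℝ (⊤ : ℕ∞) fun y0 => h y0 A B) (hF : ContDiff ℝ (⊤ : ℕ∞) F)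
    (hsym : ∀ y0 A B, h y0 A B = h y0 B A)
    (hpos : ∀ (y0 : Fin m → ℝ) (v : Fin m → ℝ), v ≠ 0 → 0 < ∑ A, ∑ B, h y0 A B * v A * v B)
    (r r' r'' : ℝ → ℝ) (y y' y'' : ℝ → Fin m → ℝ)
    (hr0 : ∀ t, r t ≠ 0)
    (hr : ∀ t, HasDerivAt r (r' t) t) (hr' : ∀ t, HasDerivAt r' (r'' t) t)
    (hy : ∀ t A, HasDerivAt (fun s => y s A) (y' t A) t)
    (hy' : ∀ t A, HasDerivAt (fun s => y' s A) (y'' t A) t)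
    -- Euler–Lagrange equation for `r`:
    (hELr : ∀ t, r'' t = r t * (∑ A, ∑ B, h (y t) A B * y' t A * y' t B)
      + μ ^ 2 * r t + 2 * F (y t) / (r t) ^ 3)
    -- Euler–Lagrange equations for the `y^A`:
    (hELy : ∀ t A, HasDerivAt (fun s => (r s) ^ 2 * ∑ B, h (y s) A B * y' s B)
      ((1 / 2) * (r t) ^ 2 * (∑ B, ∑ C, pd (fun y0 => h y0 B C) A (y t) * y' t B * y' t C)
        - pd F A (y t) / (r t) ^ 2) t) :
    ∀ t, HasDerivAt
      (fun s => (r s) ^ 4 * (∑ A, ∑ B, h (y s) A B * y' s A * y' s B) + 2 * F (y s)) 0 t := by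
  intro t
  -- curve derivative as a pi-type derivative
  have hyv : HasDerivAt y (y' t) t := hasDerivAt_pi.mpr (hy t)
  -- derivative of h (y s) A B
  set Hd : Fin m → Fin m → ℝ :=
    fun A B => fderiv ℝ (fun y0 => h y0 A B) (y t) (y' t) with hHd
  have hhd : ∀ A B, HasDerivAt (fun s => h (y s) A B) (Hd A B) t := fun A B =>
    (((hh A B).differentiable (by simp) (y t)).hasFDerivAt).comp_hasDerivAt t hyv
  have hFd : HasDerivAt (fun s => F (y s)) (fderiv ℝ F (y t) (y' t)) t :=
    ((hF.differentiable (by simp) (y t)).hasFDerivAt).comp_hasDerivAt t hyv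
  -- key scalar quantities at time t
  set K : ℝ := ∑ A, ∑ B, h (y t) A B * y' t A * y' t B with hK
  set T : ℝ := ∑ A, ∑ B, ∑ C, pd (fun y0 => h y0 B C) A (y t) * y' t A * y' t B * y' t C with hT
  set M : ℝ := ∑ A, ∑ B, h (y t) A B * y' t A * y'' t B with hM
  set FD : ℝ := ∑ A, pd F A (y t) * y' t A with hFD
  have hFD0 : fderiv ℝ F (y t) (y' t) = FD := fd_sum F (y t) (y' t)
  -- First computation of the derivative (direct)
  have hKder : HasDerivAt (fun s => ∑ A, ∑ B, h (y s) A B * y' s A * y' s B)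
      (∑ A, ∑ B, ((Hd A B * y' t A + h (y t) A B * y'' t A) * y' t B
        + h (y t) A B * y' t A * y'' t B)) t := by
    apply HasDerivAt.fun_sum; intro A _
    apply HasDerivAt.fun_sum; intro B _
    exact ((hhd A B).mul (hy' t A)).mul (hy' t B)
  have hD1 : HasDerivAt
      (fun s => (r s) ^ 4 * (∑ A, ∑ B, h (y s) A B * y' s A * y' s B) + 2 * F (y s))
      ((4 : ℕ) * r t ^ 3 * r' t * K
        + r t ^ 4 * (∑ A, ∑ B, ((Hd A B * y' t A + h (y t) A B * y'' t A) * y' t B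
          + h (y t) A B * y' t A * y'' t B))
        + 2 * FD) t := by
    rw [← hFD0]
    exact (((hr t).pow 4).mul hKder).add (hFd.const_mul 2)
  set D1 : ℝ := (4 : ℕ) * r t ^ 3 * r' t * K
      + r t ^ 4 * (∑ A, ∑ B, ((Hd A B * y' t A + h (y t) A B * y'' t A) * y' t B
        + h (y t) A B * y' t A * y'' t B))
      + 2 * FD with hD1def
  -- Second computation via the momentum decomposition
  have hq : ∀ A, HasDerivAt (fun s => (r s) ^ 2 * y' s A)
      ((2 : ℕ) * r t ^ 1 * r' t * y' t A + r t ^ 2 * y'' t A) t := fun A =>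
    ((hr t).pow 2).mul (hy' t A)
  set D2 : ℝ := (∑ A, (((1 / 2) * (r t) ^ 2 *
        (∑ B, ∑ C, pd (fun y0 => h y0 B C) A (y t) * y' t B * y' t C)
        - pd F A (y t) / (r t) ^ 2) * ((r t) ^ 2 * y' t A)
      + ((r t) ^ 2 * ∑ B, h (y t) A B * y' t B)
        * ((2 : ℕ) * r t ^ 1 * r' t * y' t A + r t ^ 2 * y'' t A)))
      + 2 * FD with hD2def
  have hD2 : HasDerivAt
      (fun s => (∑ A, ((r s) ^ 2 * ∑ B, h (y s) A B * y' s B) * ((r s) ^ 2 * y' s A))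
        + 2 * F (y s)) D2 t := by
    rw [hD2def, ← hFD0]
    apply HasDerivAt.add _ (hFd.const_mul 2)
    apply HasDerivAt.fun_sum; intro A _
    exact (hELy t A).mul (hq A)
  -- the two functions are equal
  have hfe : (fun s => (∑ A, ((r s) ^ 2 * ∑ B, h (y s) A B * y' s B) * ((r s) ^ 2 * y' s A))
        + 2 * F (y s))
      = (fun s => (r s) ^ 4 * (∑ A, ∑ B, h (y s) A B * y' s A * y' s B) + 2 * F (y s)) := by
    funext s
    congr 1
    rw [Finset.mul_sum]
    apply Finset.sum_congr rfl; intro A _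
    rw [Finset.mul_sum, Finset.mul_sum, Finset.sum_mul]
    apply Finset.sum_congr rfl; intro B _
    ring
  rw [hfe] at hD2
  have hEq : D1 = D2 := hD1.unique hD2
  -- Simplify D1
  have hS2 : (∑ A, ∑ B, h (y t) A B * y'' t A * y' t B) = M := by
    rw [hM, Finset.sum_comm]
    apply Finset.sum_congr rfl; intro A _
    apply Finset.sum_congr rfl; intro B _
    rw [hsym (y t) B A]
    ring
  have hS1 : (∑ A, ∑ B, Hd A B * y' t A * y' t B) = T := by
    have hrot := sum_rot3 (fun A B C =>
      pd (fun y0 => h y0 B C) A (y t) * y' t A * y' t B * y' t C)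
    rw [hT, hrot]
    apply Finset.sum_congr rfl; intro A _
    apply Finset.sum_congr rfl; intro B _
    rw [show Hd A B = ∑ C, pd (fun y0 => h y0 A B) C (y t) * y' t C from fd_sum _ _ _,
      Finset.sum_mul, Finset.sum_mul]
  have hL1 : D1 = 4 * r t ^ 3 * r' t * K + r t ^ 4 * T + 2 * (r t ^ 4 * M) + 2 * FD := by
    have hsplit : (∑ A, ∑ B, ((Hd A B * y' t A + h (y t) A B * y'' t A) * y' t B
        + h (y t) A B * y' t A * y'' t B))
        = (∑ A, ∑ B, Hd A B * y' t A * y' t B)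
          + ((∑ A, ∑ B, h (y t) A B * y'' t A * y' t B)
            + (∑ A, ∑ B, h (y t) A B * y' t A * y'' t B)) := by
      calc (∑ A, ∑ B, ((Hd A B * y' t A + h (y t) A B * y'' t A) * y' t B
            + h (y t) A B * y' t A * y'' t B))
          = ∑ A, ∑ B, (Hd A B * y' t A * y' t B
            + (h (y t) A B * y'' t A * y' t B + h (y t) A B * y' t A * y'' t B)) := by
            apply Finset.sum_congr rfl; intro A _
            apply Finset.sum_congr rfl; intro B _
            ring
        _ = _ := by simp only [Finset.sum_add_distrib]
    rw [hD1def, hsplit, hS1, hS2, ← hM]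
    push_cast
    ring
  -- Simplify D2
  have hL2 : D2 = 2 * r t ^ 3 * r' t * K + (1 / 2) * (r t ^ 4 * T) + r t ^ 4 * M + FD := by
    have h2 : (r t) ^ 2 ≠ 0 := pow_ne_zero _ (hr0 t)
    have hperA : ∀ A : Fin m, (((1 / 2) * (r t) ^ 2 *
          (∑ B, ∑ C, pd (fun y0 => h y0 B C) A (y t) * y' t B * y' t C)
          - pd F A (y t) / (r t) ^ 2) * ((r t) ^ 2 * y' t A)
        + ((r t) ^ 2 * ∑ B, h (y t) A B * y' t B)
          * ((2 : ℕ) * r t ^ 1 * r' t * y' t A + r t ^ 2 * y'' t A))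
        = (1 / 2) * r t ^ 4 *
            (∑ B, ∑ C, pd (fun y0 => h y0 B C) A (y t) * y' t A * y' t B * y' t C)
          - pd F A (y t) * y' t A
          + 2 * r t ^ 3 * r' t * (∑ B, h (y t) A B * y' t A * y' t B)
          + r t ^ 4 * (∑ B, h (y t) A B * y' t B * y'' t A) := by
      intro A
      have e1 : (∑ B, ∑ C, pd (fun y0 => h y0 B C) A (y t) * y' t B * y' t C) * y' t A
          = ∑ B, ∑ C, pd (fun y0 => h y0 B C) A (y t) * y' t A * y' t B * y' t C := by
        rw [Finset.sum_mul]
        apply Finset.sum_congr rfl; intro B _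
        rw [Finset.sum_mul]
        apply Finset.sum_congr rfl; intro C _
        ring
      have e2 : (∑ B, h (y t) A B * y' t B) * y' t A
          = ∑ B, h (y t) A B * y' t A * y' t B := by
        rw [Finset.sum_mul]
        apply Finset.sum_congr rfl; intro B _
        ring
      have e3 : (∑ B, h (y t) A B * y' t B) * y'' t A
          = ∑ B, h (y t) A B * y' t B * y'' t A := by
        rw [Finset.sum_mul]
      rw [← e1, ← e2, ← e3]
      push_cast
      field_simp [hr0 t]
      try ring
    have hM' : (∑ A, ∑ B, h (y t) A B * y' t B * y'' t A) = M := by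
      rw [hM, Finset.sum_comm]
      apply Finset.sum_congr rfl; intro A _
      apply Finset.sum_congr rfl; intro B _
      rw [hsym (y t) B A]
    calc D2 = (∑ A, ((1 / 2) * r t ^ 4 *
            (∑ B, ∑ C, pd (fun y0 => h y0 B C) A (y t) * y' t A * y' t B * y' t C)
          - pd F A (y t) * y' t A
          + 2 * r t ^ 3 * r' t * (∑ B, h (y t) A B * y' t A * y' t B)
          + r t ^ 4 * (∑ B, h (y t) A B * y' t B * y'' t A))) + 2 * FD := by
            rw [hD2def]
            congr 1
            exact Finset.sum_congr rfl fun A _ => hperA A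
      _ = (1 / 2) * r t ^ 4 * T - FD + 2 * r t ^ 3 * r' t * K
            + r t ^ 4 * (∑ A, ∑ B, h (y t) A B * y' t B * y'' t A) + 2 * FD := by
            congr 1
            simp only [Finset.sum_add_distrib, Finset.sum_sub_distrib, ← Finset.mul_sum]
            try rw [← hT, ← hK, ← hFD]
            try ring
      _ = 2 * r t ^ 3 * r' t * K + (1 / 2) * (r t ^ 4 * T) + r t ^ 4 * M + FD := by
            rw [hM']
            ring
  have hzero : D1 = 0 := by
    rw [hL1]
    rw [hL1, hL2] at hEq
    linarith
  exact hzero ▸ hD1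
end

section
/- If u(w,z) solves u_{wz} + V(w,z)u = 0 and V satisfies (F V)_w + (G V)_z = 0 for smooth functions F(w), G(z), then the function v := F u_w + G u_z also solves v_{wz} + V v = 0. -/
open Function

/-- Partial derivative in the first coordinate, as a scalar. -/
noncomputable def Pd (g : ℝ × ℝ → ℝ) (p : ℝ × ℝ) : ℝ := fderiv ℝ g p (1, 0)

/-- Partial derivative in the second coordinate, as a scalar. -/
noncomputable def Qd (g : ℝ × ℝ → ℝ) (p : ℝ × ℝ) : ℝ := fderiv ℝ g p (0, 1)

lemma hasDerivAt_Pd (g : ℝ × ℝ → ℝ) (hg : ContDiff ℝ (⊤ : ℕ∞) g) (a b : ℝ) :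
    HasDerivAt (fun w' => g (w', b)) (Pd g (a, b)) a := by
  have h1 : HasDerivAt (fun w' : ℝ => (w', b)) ((1 : ℝ), (0 : ℝ)) a :=
    (hasDerivAt_id a).prodMk (hasDerivAt_const a b)
  exact ((hg.differentiable (by simp) (a, b)).hasFDerivAt).comp_hasDerivAt a h1

lemma hasDerivAt_Qd (g : ℝ × ℝ → ℝ) (hg : ContDiff ℝ (⊤ : ℕ∞) g) (a b : ℝ) :
    HasDerivAt (fun z' => g (a, z')) (Qd g (a, b)) b := by
  have h1 : HasDerivAt (fun z' : ℝ => (a, z')) ((0 : ℝ), (1 : ℝ)) b :=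
    (hasDerivAt_const b a).prodMk (hasDerivAt_id b)
  exact ((hg.differentiable (by simp) (a, b)).hasFDerivAt).comp_hasDerivAt b h1

lemma contDiff_fderiv_apply (g : ℝ × ℝ → ℝ) (hg : ContDiff ℝ (⊤ : ℕ∞) g) (v : ℝ × ℝ) :
    ContDiff ℝ (⊤ : ℕ∞) (fun p => fderiv ℝ g p v) := by
  have h1 : ContDiff ℝ (⊤ : ℕ∞) (fderiv ℝ g) := hg.fderiv_right (by simp)
  exact (ContinuousLinearMap.apply ℝ ℝ v).contDiff.comp h1

lemma contDiff_Pd (g : ℝ × ℝ → ℝ) (hg : ContDiff ℝ (⊤ : ℕ∞) g) : ContDiff ℝ (⊤ : ℕ∞) (Pd g) :=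
  contDiff_fderiv_apply g hg _

lemma contDiff_Qd (g : ℝ × ℝ → ℝ) (hg : ContDiff ℝ (⊤ : ℕ∞) g) : ContDiff ℝ (⊤ : ℕ∞) (Qd g) :=
  contDiff_fderiv_apply g hg _

lemma fderiv_apply_eq (g : ℝ × ℝ → ℝ) (hg : ContDiff ℝ (⊤ : ℕ∞) g) (p v w : ℝ × ℝ) :
    fderiv ℝ (fun q => fderiv ℝ g q v) p w = fderiv ℝ (fderiv ℝ g) p w v := by
  have h1 : ContDiff ℝ (⊤ : ℕ∞) (fderiv ℝ g) := hg.fderiv_right (by simp)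
  have h2 : HasFDerivAt (fun q => fderiv ℝ g q v)
      ((ContinuousLinearMap.apply ℝ ℝ v).comp (fderiv ℝ (fderiv ℝ g) p)) p :=
    (ContinuousLinearMap.apply ℝ ℝ v).hasFDerivAt.comp p
      (h1.differentiable (by simp) p).hasFDerivAt
  rw [h2.fderiv]
  rfl

lemma symm_PQ (g : ℝ × ℝ → ℝ) (hg : ContDiff ℝ (⊤ : ℕ∞) g) : Pd (Qd g) = Qd (Pd g) := by
  funext p
  have h1 : ContDiff ℝ (⊤ : ℕ∞) (fderiv ℝ g) := hg.fderiv_right (by simp)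
  have hsymm : ∀ v w : ℝ × ℝ,
      fderiv ℝ (fderiv ℝ g) p v w = fderiv ℝ (fderiv ℝ g) p w v :=
    second_derivative_symmetric (fun y => (hg.differentiable (by simp) y).hasFDerivAt)
      (h1.differentiable (by simp) p).hasFDerivAt
  show fderiv ℝ (fun q => fderiv ℝ g q (0, 1)) p (1, 0)
      = fderiv ℝ (fun q => fderiv ℝ g q (1, 0)) p (0, 1)
  rw [fderiv_apply_eq g hg, fderiv_apply_eq g hg, hsymm]

/-- If `u(w,z)` solves `u_{wz} + V u = 0` and `(FV)_{,w} + (GV)_{,z} = 0` for smooth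
`F = F(w)`, `G = G(z)`, then `v = F u_w + G u_z` also solves `v_{wz} + V v = 0`. -/
theorem stmt_7 (F G : ℝ → ℝ) (V : ℝ → ℝ → ℝ)
    (hF : ContDiff ℝ (⊤ : ℕ∞) F) (hG : ContDiff ℝ (⊤ : ℕ∞) G)
    (hV : ContDiff ℝ (⊤ : ℕ∞) (Function.uncurry V))
    (hcond : ∀ w z, deriv (fun w' => F w' * V w' z) w + deriv (fun z' => G z' * V w z') z = 0)
    (u : ℝ → ℝ → ℝ) (hu : ContDiff ℝ (⊤ : ℕ∞) (Function.uncurry u))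
    (hsol : ∀ w z, deriv (fun z' => deriv (fun w' => u w' z') w) z + V w z * u w z = 0) :
    letI v : ℝ → ℝ → ℝ := fun w z =>
      F w * deriv (fun w' => u w' z) w + G z * deriv (fun z' => u w z') z
    ∀ w z, deriv (fun z' => deriv (fun w' => v w' z') w) z + V w z * v w z = 0 := by
  intro w z
  show deriv (fun z' => deriv (fun w' =>
      F w' * deriv (fun w'' => u w'' z') w' + G z' * deriv (fun z'' => u w' z'') z') w) z
    + V w z * (F w * deriv (fun w' => u w' z) w + G z * deriv (fun z' => u w z') z) = 0
  set f : ℝ × ℝ → ℝ := Function.uncurry u with hfdef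
  set Vf : ℝ × ℝ → ℝ := Function.uncurry V with hVfdef
  have hfs : ContDiff ℝ (⊤ : ℕ∞) f := hu
  have hVs : ContDiff ℝ (⊤ : ℕ∞) Vf := hV
  have hPf : ContDiff ℝ (⊤ : ℕ∞) (Pd f) := contDiff_Pd f hfs
  have hQf : ContDiff ℝ (⊤ : ℕ∞) (Qd f) := contDiff_Qd f hfs
  have hPPf : ContDiff ℝ (⊤ : ℕ∞) (Pd (Pd f)) := contDiff_Pd _ hPf
  have hPQf : ContDiff ℝ (⊤ : ℕ∞) (Pd (Qd f)) := contDiff_Pd _ hQf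
  have hQPf : ContDiff ℝ (⊤ : ℕ∞) (Qd (Pd f)) := contDiff_Qd _ hPf
  -- curried derivatives of u
  have hderw : ∀ a b, deriv (fun w' => u w' b) a = Pd f (a, b) := fun a b =>
    (hasDerivAt_Pd f hfs a b).deriv
  have hderz : ∀ a b, deriv (fun z' => u a z') b = Qd f (a, b) := fun a b =>
    (hasDerivAt_Qd f hfs a b).deriv
  -- the PDE in terms of Pd/Qd
  have key1 : ∀ a b, Qd (Pd f) (a, b) = -(V a b * u a b) := by
    intro a b
    have h := hsol a b
    have e : (fun z' => deriv (fun w' => u w' z') a) = fun z' => Pd f (a, z') :=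
      funext fun z' => hderw a z'
    rw [e, (hasDerivAt_Qd (Pd f) hPf a b).deriv] at h
    linarith
  have keyfun : Qd (Pd f) = fun p => -(Vf p * f p) := by
    funext p
    exact key1 p.1 p.2
  have hsymm : Pd (Qd f) = Qd (Pd f) := symm_PQ f hfs
  -- derivative of -(V u) in w and z
  have hPVu : ∀ a b, deriv (fun w' => -(V w' b * u w' b)) a
      = -(Pd Vf (a, b) * u a b + V a b * Pd f (a, b)) := by
    intro a b
    exact (((hasDerivAt_Pd Vf hVs a b).mul (hasDerivAt_Pd f hfs a b)).neg).deriv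
  have hQVu : ∀ a b, deriv (fun z' => -(V a z' * u a z')) b
      = -(Qd Vf (a, b) * u a b + V a b * Qd f (a, b)) := by
    intro a b
    exact (((hasDerivAt_Qd Vf hVs a b).mul (hasDerivAt_Qd f hfs a b)).neg).deriv
  -- third order identities
  have hQPPf : Qd (Pd (Pd f)) (w, z) = -(Pd Vf (w, z) * u w z + V w z * Pd f (w, z)) := by
    have e1 : Qd (Pd (Pd f)) (w, z) = Pd (Qd (Pd f)) (w, z) := by
      rw [symm_PQ (Pd f) hPf]
    rw [e1]
    have e2 : Pd (Qd (Pd f)) (w, z) = deriv (fun w' => Qd (Pd f) (w', z)) w :=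
      (hasDerivAt_Pd (Qd (Pd f)) hQPf w z).deriv.symm
    rw [e2]
    have e3 : (fun w' => Qd (Pd f) (w', z)) = fun w' => -(V w' z * u w' z) := by
      funext w'
      exact key1 w' z
    rw [e3, hPVu w z]
  have hQPQf : Qd (Pd (Qd f)) (w, z) = -(Qd Vf (w, z) * u w z + V w z * Qd f (w, z)) := by
    rw [hsymm]
    have e2 : Qd (Qd (Pd f)) (w, z) = deriv (fun z' => Qd (Pd f) (w, z')) z :=
      (hasDerivAt_Qd (Qd (Pd f)) hQPf w z).deriv.symm
    rw [e2]
    have e3 : (fun z' => Qd (Pd f) (w, z')) = fun z' => -(V w z' * u w z') := by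
      funext z'
      exact key1 w z'
    rw [e3, hQVu w z]
  -- inner derivative of v
  have inner : ∀ a b, deriv (fun w' =>
        F w' * deriv (fun w'' => u w'' b) w' + G b * deriv (fun z'' => u w' z'') b) a
      = deriv F a * Pd f (a, b) + F a * Pd (Pd f) (a, b) + G b * Pd (Qd f) (a, b) := by
    intro a b
    have e : (fun w' => F w' * deriv (fun w'' => u w'' b) w' + G b * deriv (fun z'' => u w' z'') b)
        = fun w' => F w' * Pd f (w', b) + G b * Qd f (w', b) := by
      funext w'
      rw [hderw, hderz]
    rw [e]
    exact (((hF.differentiable (by simp) a).hasDerivAt.mul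
      (hasDerivAt_Pd (Pd f) hPf a b)).add
      ((hasDerivAt_Pd (Qd f) hQf a b).const_mul (G b))).deriv
  -- outer derivative
  have outer : deriv (fun z' => deriv (fun w' =>
        F w' * deriv (fun w'' => u w'' z') w' + G z' * deriv (fun z'' => u w' z'') z') w) z
      = deriv F w * Qd (Pd f) (w, z) + F w * Qd (Pd (Pd f)) (w, z)
        + (deriv G z * Pd (Qd f) (w, z) + G z * Qd (Pd (Qd f)) (w, z)) := by
    have e : (fun z' => deriv (fun w' =>
          F w' * deriv (fun w'' => u w'' z') w' + G z' * deriv (fun z'' => u w' z'') z') w)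
        = fun z' => deriv F w * Pd f (w, z') + F w * Pd (Pd f) (w, z')
            + G z' * Pd (Qd f) (w, z') := funext fun z' => inner w z'
    rw [e]
    exact ((((hasDerivAt_Qd (Pd f) hPf w z).const_mul (deriv F w)).add
      ((hasDerivAt_Qd (Pd (Pd f)) hPPf w z).const_mul (F w))).add
      ((hG.differentiable (by simp) z).hasDerivAt.mul
        (hasDerivAt_Qd (Pd (Qd f)) hPQf w z))).deriv
  -- the condition on V
  have hcond' : deriv F w * V w z + F w * Pd Vf (w, z)
      + (deriv G z * V w z + G z * Qd Vf (w, z)) = 0 := by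
    have h := hcond w z
    have e1 : deriv (fun w' => F w' * V w' z) w
        = deriv F w * V w z + F w * Pd Vf (w, z) :=
      ((hF.differentiable (by simp) w).hasDerivAt.mul (hasDerivAt_Pd Vf hVs w z)).deriv
    have e2 : deriv (fun z' => G z' * V w z') z
        = deriv G z * V w z + G z * Qd Vf (w, z) :=
      ((hG.differentiable (by simp) z).hasDerivAt.mul (hasDerivAt_Qd Vf hVs w z)).deriv
    rw [e1, e2] at h
    linarith
  have hPQfval : Pd (Qd f) (w, z) = -(V w z * u w z) := by rw [hsymm]; exact key1 w z
  rw [outer, hQPPf, hQPQf, hPQfval, key1 w z, hderw w z, hderz w z]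
  linear_combination (-(u w z)) * hcond'
end
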